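/- Let K, K₀ ∈ 𝒦^{n*} and let r = d_H(K,K₀) be their Hausdorff distance. Then θ^l(K) ≤ (1+r)^{2n}·θ^l(K₀). -/

import Mathlib

/-! Since both bodies are convex and contain the unit ball, `d_H(K, K₀) ≤ r` gives
`K ⊆ (1 + r) K₀` and `K₀ ⊆ (1 + r) K`. A lattice covering by `K₀` is therefore a covering by
`(1 + r) K`, so `θ^l((1 + r) K) ≤ vol((1 + r) K) / vol(K₀) · θ^l(K₀)`; the left side equals
`θ^l(K)` by dilation invariance, and the volume ratio is at most `(1 + r)^n · (1 + r)^n`. -/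

open Metric Set Pointwise MeasureTheory Filter ENNReal

/-- The lattice covering density `θ^l(K)`:
`inf {vol(K)/det Λ : Λ a lattice in ℝⁿ with ⋃_{λ ∈ Λ} (K + λ) = ℝⁿ}`, where a lattice is the
set of integer linear combinations of a basis of `ℝⁿ`, and its covolume `det Λ` is the volume
of a fundamental parallelepiped. -/
noncomputable def thetaL (n : ℕ) (K : Set (EuclideanSpace ℝ (Fin n))) : ℝ≥0∞ :=
  ⨅ (b : Module.Basis (Fin n) ℝ (EuclideanSpace ℝ (Fin n)))
    (_ : ⋃ v ∈ (Submodule.span ℤ (Set.range ⇑b) : Submodule ℤ (EuclideanSpace ℝ (Fin n))).carrier,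
        v +ᵥ K = Set.univ),
    volume K / volume (ZSpan.fundamentalDomain b)

theorem Metric.subset_one_add_smul_of_hausdorffDist_le {E : Type*} [NormedAddCommGroup E]
    [NormedSpace ℝ E] {A B : Set E} {r : ℝ} (hA : Bornology.IsBounded A) (hB : IsCompact B)
    (hBconv : Convex ℝ B) (hball : closedBall 0 1 ⊆ B) (hr : hausdorffDist A B ≤ r) :
    A ⊆ (1 + r) • B := by
  have hr0 : 0 ≤ r := hausdorffDist_nonneg.trans hr
  have hBne : B.Nonempty := ⟨0, hball (mem_closedBall_self zero_le_one)⟩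
  have hA_thick : A ⊆ cthickening r B := fun x hx => by
    obtain ⟨y, hy, hxy⟩ := hB.exists_infDist_eq_dist hBne x
    refine mem_cthickening_of_dist_le x y r B hy ?_
    rw [← hxy]
    exact (infDist_le_hausdorffDist_of_mem hx
      (hausdorffEDist_ne_top_of_nonempty_of_bounded ⟨x, hx⟩ hBne hA hB.isBounded)).trans hr
  calc A ⊆ cthickening r B := hA_thick
    _ = B + r • closedBall 0 1 := by
      rw [smul_unitClosedBall_of_nonneg hr0, hB.add_closedBall_zero hr0]
    _ ⊆ B + r • B := add_subset_add_left (smul_set_mono hball)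
    _ = (1 + r) • B := by rw [hBconv.add_smul zero_le_one hr0, one_smul]

theorem ZSpan.fundamentalDomain_isUnitSMul {E ι K : Type*} [NormedField K] [LinearOrder K]
    [NormedAddCommGroup E] [NormedSpace K E] (b : Module.Basis ι K E) {c : K} (hc : c ≠ 0) :
    fundamentalDomain (b.isUnitSMul fun _ => hc.isUnit) = c • fundamentalDomain b := by
  have hmap : b.isUnitSMul (fun _ => hc.isUnit) = b.map (LinearEquiv.smulOfNeZero K E c hc) :=
    Module.Basis.eq_of_apply_eq fun i => by simp [Module.Basis.isUnitSMul_apply]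
  rw [hmap, ← map_fundamentalDomain]
  rfl

def IsLatticeCovering {E ι : Type*} [AddCommGroup E] [Module ℝ E] (b : Module.Basis ι ℝ E)
    (K : Set E) : Prop :=
  ⋃ v ∈ (Submodule.span ℤ (Set.range ⇑b)).carrier, v +ᵥ K = univ

theorem IsLatticeCovering.mono {E ι : Type*} [AddCommGroup E] [Module ℝ E]
    {b : Module.Basis ι ℝ E} {K K' : Set E} (hcov : IsLatticeCovering b K) (h : K ⊆ K') :
    IsLatticeCovering b K' :=
  eq_univ_of_univ_subset (hcov ▸ iUnion₂_mono fun _ _ => vadd_set_mono h)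

theorem IsLatticeCovering.smul {E ι : Type*} [NormedAddCommGroup E] [NormedSpace ℝ E]
    {b : Module.Basis ι ℝ E} {K : Set E} (hcov : IsLatticeCovering b K) {c : ℝ} (hc : c ≠ 0) :
    IsLatticeCovering (b.isUnitSMul fun _ => hc.isUnit) (c • K) := by
  simp only [IsLatticeCovering, iUnion_vadd_set, vadd_eq_add, Submodule.carrier_eq_coe] at hcov ⊢
  rw [← ZSpan.smul b hc, Submodule.coe_pointwise_smul, ← smul_add, hcov, smul_set_univ₀ hc]

theorem thetaL_smul_le {n : ℕ} (K : Set (EuclideanSpace ℝ (Fin n))) {c : ℝ} (hc : c ≠ 0) :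
    thetaL n (c • K) ≤ thetaL n K := by
  unfold thetaL
  refine le_iInf₂ fun b hcov => ?_
  refine (iInf₂_le (b.isUnitSMul fun _ => hc.isUnit) (IsLatticeCovering.smul hcov hc)).trans_eq ?_
  have hscale : ENNReal.ofReal |c ^ Module.finrank ℝ (EuclideanSpace ℝ (Fin n))| ≠ 0 :=
    (ENNReal.ofReal_pos.mpr (by positivity)).ne'
  rw [ZSpan.fundamentalDomain_isUnitSMul b hc, Measure.addHaar_smul, Measure.addHaar_smul,
    ENNReal.mul_div_mul_left _ _ hscale ENNReal.ofReal_ne_top]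

theorem thetaL_smul {n : ℕ} (K : Set (EuclideanSpace ℝ (Fin n))) {c : ℝ} (hc : c ≠ 0) :
    thetaL n (c • K) = thetaL n K :=
  (thetaL_smul_le K hc).antisymm <| by
    simpa only [inv_smul_smul₀ hc] using thetaL_smul_le (c • K) (inv_ne_zero hc)

theorem thetaL_le_of_subset {n : ℕ} {K K₀ : Set (EuclideanSpace ℝ (Fin n))} (h : K₀ ⊆ K)
    (hK : volume K ≠ ⊤) (hK₀ : volume K₀ ≠ 0) :
    thetaL n K ≤ volume K / volume K₀ * thetaL n K₀ := by
  have hK₀_top : volume K₀ ≠ ⊤ := ne_top_of_le_ne_top hK (measure_mono h)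
  have hK_pos : volume K ≠ 0 := fun h0 => hK₀ (measure_mono_null h h0)
  have hratio_pos : volume K / volume K₀ ≠ 0 := (ENNReal.div_pos hK_pos hK₀_top).ne'
  have hratio_top : volume K / volume K₀ ≠ ⊤ := ENNReal.div_ne_top hK hK₀
  unfold thetaL
  rw [ENNReal.mul_iInf_of_ne hratio_pos hratio_top]
  refine le_iInf fun b => ?_
  rw [ENNReal.mul_iInf_of_ne hratio_pos hratio_top]
  refine le_iInf fun hcov => (iInf₂_le b (IsLatticeCovering.mono hcov h)).trans_eq ?_
  rw [div_eq_mul_inv, div_eq_mul_inv, div_eq_mul_inv, mul_assoc, ← mul_assoc (volume K₀)⁻¹,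
    ENNReal.inv_mul_cancel hK₀ hK₀_top, one_mul]

theorem stmt_4_general (n : ℕ) (K K₀ : Set (EuclideanSpace ℝ (Fin n)))
    (hKcomp : IsCompact K) (hKconv : Convex ℝ K)
    (hK₀comp : IsCompact K₀) (hK₀conv : Convex ℝ K₀) (hK₀int : (interior K₀).Nonempty)
    (hKl : closedBall (0 : EuclideanSpace ℝ (Fin n)) 1 ⊆ K)
    (hK₀l : closedBall (0 : EuclideanSpace ℝ (Fin n)) 1 ⊆ K₀)
    (r : ℝ) (hr : r = hausdorffDist K K₀) :
    thetaL n K ≤ ENNReal.ofReal ((1 + r) ^ (2 * n)) * thetaL n K₀ := by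
  have ht : 0 < 1 + r := by linarith [hr ▸ hausdorffDist_nonneg (s := K) (t := K₀)]
  have hKK₀ : K ⊆ (1 + r) • K₀ :=
    subset_one_add_smul_of_hausdorffDist_le hKcomp.isBounded hK₀comp hK₀conv hK₀l hr.ge
  have hK₀K : K₀ ⊆ (1 + r) • K :=
    subset_one_add_smul_of_hausdorffDist_le hK₀comp.isBounded hKcomp hKconv hKl
      (hausdorffDist_comm.trans_le hr.ge)
  have hvol_scale (A : Set (EuclideanSpace ℝ (Fin n))) :
      volume ((1 + r) • A) = ENNReal.ofReal ((1 + r) ^ n) * volume A := by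
    rw [Measure.addHaar_smul_of_nonneg _ ht.le, finrank_euclideanSpace_fin]
  have hvol : volume ((1 + r) • K) ≤ ENNReal.ofReal ((1 + r) ^ (2 * n)) * volume K₀ :=
    calc volume ((1 + r) • K) ≤ ENNReal.ofReal ((1 + r) ^ n) * volume ((1 + r) • K₀) := by
          rw [hvol_scale]; gcongr
      _ = ENNReal.ofReal ((1 + r) ^ (2 * n)) * volume K₀ := by
          rw [hvol_scale, ← mul_assoc, ← ENNReal.ofReal_mul (by positivity), ← pow_add, two_mul]
  calc thetaL n K = thetaL n ((1 + r) • K) := (thetaL_smul K ht.ne').symm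
    _ ≤ volume ((1 + r) • K) / volume K₀ * thetaL n K₀ :=
      thetaL_le_of_subset hK₀K (hKcomp.smul _).measure_ne_top
        (Measure.measure_pos_of_nonempty_interior _ hK₀int).ne'
    _ ≤ ENNReal.ofReal ((1 + r) ^ (2 * n)) * thetaL n K₀ := by
      gcongr
      exact ENNReal.div_le_of_le_mul hvol

/-- Let `K, K₀ ∈ 𝒦^{n*}` and let `r = d_H(K, K₀)` be their Hausdorff distance.
Then `θ^l(K) ≤ (1+r)^{2n} · θ^l(K₀)`. -/
theorem stmt_4 (n : ℕ) (hn : 1 ≤ n) (K K₀ : Set (EuclideanSpace ℝ (Fin n)))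
    (hKcomp : IsCompact K) (hKconv : Convex ℝ K) (hKint : (interior K).Nonempty)
    (hK₀comp : IsCompact K₀) (hK₀conv : Convex ℝ K₀) (hK₀int : (interior K₀).Nonempty)
    (hKl : closedBall (0 : EuclideanSpace ℝ (Fin n)) 1 ⊆ K) (hKu : K ⊆ closedBall 0 n)
    (hK₀l : closedBall (0 : EuclideanSpace ℝ (Fin n)) 1 ⊆ K₀) (hK₀u : K₀ ⊆ closedBall 0 n)
    (r : ℝ) (hr : r = hausdorffDist K K₀) :
    thetaL n K ≤ ENNReal.ofReal ((1 + r) ^ (2 * n)) * thetaL n K₀ :=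
  stmt_4_general n K K₀ hKcomp hKconv hK₀comp hK₀conv hK₀int hKl hK₀l r hr
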